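/- arXiv:2207.12602 — 4 statements merged into one kernel-verified Lean document; each statement's English description precedes it below -/
import Mathlib

section
/- Let d ≥ 2 be an integer and δ ∈ (0,1). If Y is a random variable with the Gamma distribution of shape d and rate 1 (equivalently, Y is the sum of d independent Exponential(1) random variables), then P(Y ≥ t) ≤ δ, where t = (√(2·ln(δ)·(2·ln(δ) − 9d)) + 3d − 2·ln(δ))/3. Equivalently, the (1−δ)-quantile ρ(δ,d) of Y is at most t. -/
/-!
Chernoff bound: on `[t, ∞)` the Gamma(a, r) density is at most `e^{-θt} (r/(r-θ))^a` times the
Gamma(a, r - θ) density, so `P(Y ≥ t) ≤ e^{-θt} (r/(r-θ))^a`; at the optimal `θ` and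
`t = a(1+u)/r` this is `exp(-a(u - log(1+u)))`. The Padé bound `log(1+u) ≤ u(6+u)/(6+4u)` turns the
exponent into `-3au²/(6+4u)`, and the threshold of the theorem is `d(1+u)` for the `u` at which
this exponent equals `log δ`.
-/

open MeasureTheory ProbabilityTheory Real

lemma Real.log_one_add_le_pade {u : ℝ} (hu : 0 ≤ u) :
    log (1 + u) ≤ u * (6 + u) / (6 + 4 * u) := by
  let f : ℝ → ℝ := fun x ↦ x * (6 + x) / (6 + 4 * x) - log (1 + x)
  have hderiv (x : ℝ) (hx : 0 < x) :
      HasDerivAt f (4 * x ^ 3 / ((6 + 4 * x) ^ 2 * (1 + x))) x := by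
    refine ((((hasDerivAt_id' x).mul ((hasDerivAt_id' x).const_add 6)).div
      (((hasDerivAt_id' x).const_mul 4).const_add 6) (by positivity)).sub
      (((hasDerivAt_id' x).const_add 1).log (by positivity))).congr_deriv ?_
    simp only [Pi.mul_apply]
    field_simp
    ring
  have hmono : MonotoneOn f (Set.Ici 0) := by
    refine monotoneOn_of_hasDerivWithinAt_nonneg (convex_Ici 0) ?_
      (fun x hx ↦ (hderiv x (by rwa [interior_Ici] at hx)).hasDerivWithinAt) ?_
    · refine ContinuousOn.sub (ContinuousOn.div (by fun_prop) (by fun_prop) ?_)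
        (ContinuousOn.log (by fun_prop) ?_) <;>
      · intro x (hx : 0 ≤ x); positivity
    · intro x hx
      rw [interior_Ici, Set.mem_Ioi] at hx
      positivity
  have h := hmono Set.self_mem_Ici hu hu
  norm_num [f] at h
  linarith

namespace ProbabilityTheory

lemma gammaPDFReal_le_mul_gammaPDFReal {a r θ t x : ℝ} (ha : 0 < a) (hθ : 0 ≤ θ) (hθr : θ < r)
    (hx : t ≤ x) :
    gammaPDFReal a r x ≤ exp (-(θ * t)) * (r / (r - θ)) ^ a * gammaPDFReal a (r - θ) x := by
  have hr : 0 < r := hθ.trans_lt hθr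
  have hrθ : 0 < r - θ := sub_pos.mpr hθr
  unfold gammaPDFReal
  split_ifs with hx0
  · have := Gamma_pos_of_pos ha
    calc r ^ a / Gamma a * x ^ (a - 1) * exp (-(r * x))
        ≤ r ^ a / Gamma a * x ^ (a - 1) * exp (-(θ * t) + -((r - θ) * x)) := by
          gcongr
          nlinarith
      _ = _ := by
          rw [div_rpow (by linarith) hrθ.le, exp_add]
          field_simp
  · simp

lemma gammaMeasure_Ici_le {a r θ : ℝ} (ha : 0 < a) (hθ : 0 ≤ θ) (hθr : θ < r) (t : ℝ) :
    gammaMeasure a r (Set.Ici t) ≤ ENNReal.ofReal (exp (-(θ * t)) * (r / (r - θ)) ^ a) := by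
  set C := exp (-(θ * t)) * (r / (r - θ)) ^ a
  have hr : 0 < r := hθ.trans_lt hθr
  have hC : 0 ≤ C := by have : 0 < r - θ := sub_pos.mpr hθr; positivity
  have hmeas : Measurable (gammaPDF a (r - θ)) := (measurable_gammaPDFReal a (r - θ)).ennreal_ofReal
  rw [gammaMeasure, withDensity_apply _ measurableSet_Ici]
  calc ∫⁻ x in Set.Ici t, gammaPDF a r x
      ≤ ∫⁻ x in Set.Ici t, ENNReal.ofReal C * gammaPDF a (r - θ) x := by
        refine setLIntegral_mono (hmeas.const_mul _) fun x hx ↦ ?_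
        rw [gammaPDF, gammaPDF, ← ENNReal.ofReal_mul hC]
        exact ENNReal.ofReal_le_ofReal (gammaPDFReal_le_mul_gammaPDFReal ha hθ hθr hx)
    _ ≤ ∫⁻ x, ENNReal.ofReal C * gammaPDF a (r - θ) x := setLIntegral_le_lintegral _ _
    _ = ENNReal.ofReal C := by
        rw [lintegral_const_mul _ hmeas, lintegral_gammaPDF_eq_one ha (by linarith), mul_one]

lemma gammaMeasure_Ici_mul_one_add_le {a r u : ℝ} (ha : 0 < a) (hr : 0 < r) (hu : 0 ≤ u) :
    gammaMeasure a r (Set.Ici (a * (1 + u) / r)) ≤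
      ENNReal.ofReal (exp (-(a * (u - log (1 + u))))) := by
  have hθr : r * u / (1 + u) < r := by
    rw [div_lt_iff₀ (by positivity)]
    nlinarith
  convert gammaMeasure_Ici_le ha (by positivity) hθr (a * (1 + u) / r) using 2
  have h1u : 0 < 1 + u := by positivity
  rw [show r / (r - r * u / (1 + u)) = 1 + u by field_simp; ring, rpow_def_of_pos h1u, ← exp_add]
  congr 1
  field_simp
  ring

lemma gammaMeasure_Ici_mul_one_add_le_exp_sq {a r u : ℝ} (ha : 0 < a) (hr : 0 < r) (hu : 0 ≤ u) :
    gammaMeasure a r (Set.Ici (a * (1 + u) / r)) ≤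
      ENNReal.ofReal (exp (-(3 * a * u ^ 2 / (6 + 4 * u)))) := by
  refine (gammaMeasure_Ici_mul_one_add_le ha hr hu).trans (ENNReal.ofReal_le_ofReal ?_)
  rw [exp_le_exp, neg_le_neg_iff, show 3 * a * u ^ 2 / (6 + 4 * u) =
    a * (u - u * (6 + u) / (6 + 4 * u)) by field_simp; ring]
  gcongr
  exact log_one_add_le_pade hu

end ProbabilityTheory

/-- For `d ≥ 2` and `δ ∈ (0,1)`, if `Y ~ Gamma(d, 1)` then
`P(Y ≥ t) ≤ δ` where `t = (√(2·ln δ·(2·ln δ − 9d)) + 3d − 2·ln δ)/3`; equivalently the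
`(1−δ)`-quantile of the Gamma(d,1) distribution is at most `t`. -/
theorem gamma_tail_quantile_bound (d : ℕ) (hd : 2 ≤ d) (δ : ℝ) (hδ : δ ∈ Set.Ioo (0 : ℝ) 1) :
    gammaMeasure d 1
      (Set.Ici ((Real.sqrt (2 * Real.log δ * (2 * Real.log δ - 9 * d))
        + 3 * d - 2 * Real.log δ) / 3)) ≤ ENNReal.ofReal δ := by
  have hd₀ : (0 : ℝ) < d := by exact_mod_cast (by omega : 0 < d)
  set L := -log δ
  have hL : 0 ≤ L := neg_nonneg.mpr (log_nonpos hδ.1.le hδ.2.le)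
  set s := √(2 * log δ * (2 * log δ - 9 * d))
  have hs : s ^ 2 = 4 * L ^ 2 + 18 * d * L := by
    rw [sq_sqrt (by nlinarith)]
    ring
  -- the positive root of `3 d u² = L (6 + 4 u)`
  set u := (s + 2 * L) / (3 * d)
  have hu : 0 ≤ u := by positivity
  have hthreshold : (s + 3 * d - 2 * log δ) / 3 = d * (1 + u) / 1 := by
    simp only [u, L]
    field_simp
    ring
  have hroot : 3 * d * u ^ 2 = L * (6 + 4 * u) := by
    simp only [u]
    field_simp
    linear_combination hs
  rw [hthreshold]
  calc gammaMeasure d 1 (Set.Ici (d * (1 + u) / 1))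
      ≤ ENNReal.ofReal (exp (-(3 * d * u ^ 2 / (6 + 4 * u)))) :=
        gammaMeasure_Ici_mul_one_add_le_exp_sq hd₀ one_pos hu
    _ = ENNReal.ofReal δ := by
        rw [hroot, mul_div_cancel_right₀ _ (by positivity), neg_neg, exp_log hδ.1]
end

section
/- Let d ≥ 1 be an integer, δ ∈ (0,1), and let r be any real number with r ≥ (√(2·ln(δ)·(2·ln(δ) − 9d)) − 2·ln(δ))/(3d). Then (1+r)·e^{−r} ≤ δ^{1/d}. -/
open Real

/-- Padé-type bound: `log (1+x) ≤ x - 3x²/(2(3+2x))` for `x ≥ 0`. -/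
lemma aux_log_pade (x : ℝ) (hx : 0 ≤ x) :
    Real.log (1 + x) ≤ x - 3 * x ^ 2 / (2 * (3 + 2 * x)) := by
  have h1 : (0 : ℝ) < 3 + 2 * x := by linarith
  set t : ℝ := x * (6 + x) / (2 * (3 + 2 * x)) with htdef
  have ht0 : 0 ≤ t := by positivity
  have hsum : 1 + t + t ^ 2 / 2 + t ^ 3 / 6 + t ^ 4 / 24 ≤ Real.exp t := by
    have h := Real.sum_le_exp_of_nonneg ht0 5
    simp [Finset.sum_range_succ, Nat.factorial] at h
    norm_num at h
    linarith
  have hkey : 1 + t + t ^ 2 / 2 + t ^ 3 / 6 + t ^ 4 / 24 - (1 + x)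
      = x ^ 4 * (864 + 1296 * x + 720 * x ^ 2 + 40 * x ^ 3 + x ^ 4)
        / (24 * (6 + 4 * x) ^ 4) := by
    rw [htdef]
    field_simp
    ring
  have hx1 : 1 + x ≤ Real.exp t := by
    have hpos : 0 ≤ x ^ 4 * (864 + 1296 * x + 720 * x ^ 2 + 40 * x ^ 3 + x ^ 4)
        / (24 * (6 + 4 * x) ^ 4) := by positivity
    linarith
  have hlog : Real.log (1 + x) ≤ t :=
    (Real.log_le_iff_le_exp (by linarith)).mpr hx1
  have ht : t = x - 3 * x ^ 2 / (2 * (3 + 2 * x)) := by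
    rw [htdef]; field_simp; ring
  linarith [hlog, ht ▸ hlog]

/-- For `d ≥ 1`, `δ ∈ (0,1)` and any real
`r ≥ (√(2·ln δ·(2·ln δ − 9d)) − 2·ln δ)/(3d)`, one has `(1+r)·e^{−r} ≤ δ^{1/d}`. -/
theorem one_add_mul_exp_le_rpow (d : ℕ) (hd : 1 ≤ d) (δ r : ℝ) (hδ : δ ∈ Set.Ioo (0 : ℝ) 1)
    (hr : (Real.sqrt (2 * Real.log δ * (2 * Real.log δ - 9 * d)) - 2 * Real.log δ)
        / (3 * d) ≤ r) :
    (1 + r) * Real.exp (-r) ≤ δ ^ ((1 : ℝ) / d) := by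
  obtain ⟨hδ0, hδ1⟩ := hδ
  set L : ℝ := Real.log δ with hLdef
  have hL : L < 0 := Real.log_neg hδ0 hδ1
  have hD : (1 : ℝ) ≤ (d : ℝ) := by exact_mod_cast hd
  have hD0 : (0 : ℝ) < (d : ℝ) := by linarith
  set s : ℝ := Real.sqrt (2 * L * (2 * L - 9 * d)) with hsdef
  have hs0 : 0 ≤ s := Real.sqrt_nonneg _
  have harg : 0 ≤ 2 * L * (2 * L - 9 * d) := by nlinarith
  have hs2 : s ^ 2 = 2 * L * (2 * L - 9 * d) := Real.sq_sqrt harg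
  have hr' : s - 2 * L ≤ 3 * d * r := by
    rw [div_le_iff₀ (by positivity)] at hr
    linarith
  have hrpos : 0 < r := by nlinarith
  have hquad : 0 ≤ 3 * d * r ^ 2 + 4 * L * r + 6 * L := by
    have h1 : s ≤ 3 * d * r + 2 * L := by linarith
    have h2 : s * s ≤ (3 * d * r + 2 * L) * (3 * d * r + 2 * L) :=
      mul_self_le_mul_self hs0 h1
    nlinarith [h2, hs2, hD0]
  have hlog : Real.log (1 + r) ≤ r + L / d := by
    have h3 := aux_log_pade r hrpos.le
    have h4 : -(3 * r ^ 2) / (2 * (3 + 2 * r)) ≤ L / d := by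
      rw [div_le_div_iff₀ (by positivity) hD0]
      nlinarith [hquad]
    have : r - 3 * r ^ 2 / (2 * (3 + 2 * r)) ≤ r + L / d := by
      have : -(3 * r ^ 2) / (2 * (3 + 2 * r)) = -(3 * r ^ 2 / (2 * (3 + 2 * r))) := by
        ring
      linarith [h4, this ▸ h4]
    linarith
  have hrw : δ ^ ((1 : ℝ) / d) = Real.exp (L / d) := by
    rw [Real.rpow_def_of_pos hδ0, ← hLdef]
    ring_nf
  rw [hrw]
  have h5 : (1 + r) * Real.exp (-r) = Real.exp (Real.log (1 + r) - r) := by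
    rw [Real.exp_sub, Real.exp_log (by linarith), Real.exp_neg]; ring
  rw [h5]
  exact Real.exp_le_exp.mpr (by linarith)
end

section
/- Let Θ ⊆ ℝ^d be closed and bounded, let D be a finite multiset of n points in ℝ^d, and set m = max over θ ∈ Θ of hdepth(θ, D). Then for every dataset D' of n points with d_H(D, D') ≤ 2k, every maximizer θ' of hdepth(·, D') over Θ satisfies hdepth(θ', D) ≥ m − 2k; that is, argmax over Θ of hdepth(·, D') is contained in the depth contour Ω(m − 2k, D) = {θ ∈ Θ : hdepth(θ, D) ≥ m − 2k}. -/
open scoped Classical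

/-- Halfspace depth of `θ` in a finite multiset `D ⊆ ℝ^d`. -/
noncomputable def hdepth {d : ℕ} (θ : Fin d → ℝ) (D : Multiset (Fin d → ℝ)) : ℕ :=
  sInf {k : ℕ | ∃ u : Fin d → ℝ, u ≠ 0 ∧
    k = Multiset.card (D.filter fun x => 0 ≤ ∑ i, u i * (x i - θ i))}

/-- Hamming distance between two finite multisets: the minimum number of record
additions and removals needed to transform one into the other. -/
noncomputable def dH {α : Type*} (D D' : Multiset α) : ℕ :=
  Multiset.card (D - D') + Multiset.card (D' - D)

/-- Maximum halfspace depth over the feasible set `Θ`. -/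
noncomputable def maxHDepth {d : ℕ} (Θ : Set (Fin d → ℝ)) (D : Multiset (Fin d → ℝ)) : ℕ :=
  sSup ((fun θ => hdepth θ D) '' Θ)

lemma filter_card_le {α : Type*} (D D' : Multiset α) (p : α → Prop) [DecidableEq α] [DecidablePred p] :
    Multiset.card (D.filter p) ≤ Multiset.card (D'.filter p) + Multiset.card (D - D') := by
  have h1 : D ≤ D - D' + D' := le_tsub_add
  have h2 : Multiset.card (D.filter p) ≤ Multiset.card ((D - D' + D').filter p) :=
    Multiset.card_le_card (Multiset.filter_le_filter p h1)
  rw [Multiset.filter_add, Multiset.card_add] at h2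
  have h3 : Multiset.card ((D - D').filter p) ≤ Multiset.card (D - D') :=
    Multiset.card_le_card (Multiset.filter_le _ _)
  omega

lemma hdepth_perturb {d : ℕ} (θ : Fin d → ℝ) (D D' : Multiset (Fin d → ℝ)) :
    hdepth θ D ≤ hdepth θ D' + Multiset.card (D - D') := by
  by_cases h : ∃ u : Fin d → ℝ, u ≠ 0
  · obtain ⟨u, hu⟩ := h
    have hne : {k : ℕ | ∃ u : Fin d → ℝ, u ≠ 0 ∧
        k = Multiset.card (D'.filter fun x => 0 ≤ ∑ i, u i * (x i - θ i))}.Nonempty :=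
      ⟨_, u, hu, rfl⟩
    have hmem := Nat.sInf_mem hne
    obtain ⟨u0, hu0, hval⟩ := hmem
    have h1 : hdepth θ D ≤
        Multiset.card (D.filter fun x => 0 ≤ ∑ i, u0 i * (x i - θ i)) :=
      Nat.sInf_le ⟨u0, hu0, rfl⟩
    have h2 := filter_card_le D D' (fun x => 0 ≤ ∑ i, u0 i * (x i - θ i))
    unfold hdepth
    rw [← hval] at h2
    exact le_trans h1 h2
  · have : {k : ℕ | ∃ u : Fin d → ℝ, u ≠ 0 ∧
        k = Multiset.card (D.filter fun x => 0 ≤ ∑ i, u i * (x i - θ i))} = ∅ := by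
      ext m; simp only [Set.mem_setOf_eq, Set.mem_empty_iff_false, iff_false]
      rintro ⟨u, hu, -⟩; exact h ⟨u, hu⟩
    unfold hdepth
    rw [this, Nat.sInf_empty]
    exact Nat.zero_le _

lemma hdepth_le_card {d : ℕ} (θ : Fin d → ℝ) (D : Multiset (Fin d → ℝ)) :
    hdepth θ D ≤ Multiset.card D := by
  by_cases hne : {k : ℕ | ∃ u : Fin d → ℝ, u ≠ 0 ∧
      k = Multiset.card (D.filter fun x => 0 ≤ ∑ i, u i * (x i - θ i))}.Nonempty
  · obtain ⟨u, hu, hval⟩ := Nat.sInf_mem hne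
    unfold hdepth
    rw [hval]
    exact Multiset.card_le_card (Multiset.filter_le _ _)
  · unfold hdepth
    rw [Set.not_nonempty_iff_eq_empty] at hne
    rw [hne, Nat.sInf_empty]
    exact Nat.zero_le _

/-- If `Θ ⊆ ℝ^d` is closed and bounded, `D` has `n` points and
`m = max_{θ ∈ Θ} hdepth(θ, D)`, then for every size-`n` dataset `D'` with
`d_H(D, D') ≤ 2k`, every maximizer `θ'` of `hdepth(·, D')` over `Θ` satisfies
`hdepth(θ', D) ≥ m − 2k`; i.e. the maximizers lie in the contour `Ω(m − 2k, D)`. -/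
theorem hdepth_maximizers_in_contour (d n k : ℕ) (Θ : Set (Fin d → ℝ))
    (hΘc : IsClosed Θ) (hΘb : Bornology.IsBounded Θ)
    (D : Multiset (Fin d → ℝ)) (hD : Multiset.card D = n) :
    ∀ D' : Multiset (Fin d → ℝ), Multiset.card D' = n → dH D D' ≤ 2 * k →
      ∀ θ' ∈ Θ, (∀ θ ∈ Θ, hdepth θ D' ≤ hdepth θ' D') →
        maxHDepth Θ D - 2 * k ≤ hdepth θ' D := by
  intro D' hD' hdH θ' hθ' hmax
  have himg : ((fun θ => hdepth θ D) '' Θ).Nonempty := ⟨_, θ', hθ', rfl⟩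
  have hbdd : BddAbove ((fun θ => hdepth θ D) '' Θ) := by
    refine ⟨n, ?_⟩
    rintro m ⟨θ, hθ, rfl⟩
    simpa [hD] using hdepth_le_card θ D
  obtain ⟨θs, hθs, hval⟩ := Nat.sSup_mem himg hbdd
  have c1 := hdepth_perturb θs D D'
  have c2 := hdepth_perturb θ' D' D
  have c3 := hmax θs hθs
  have hdH' : Multiset.card (D - D') + Multiset.card (D' - D) ≤ 2 * k := by
    unfold dH at hdH
    convert hdH using 2 <;> congr!
  have hmx : maxHDepth Θ D = hdepth θs D := by
    unfold maxHDepth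
    exact hval.symm
  omega
end

section
/- Let d ≥ 2 and let 𝒞_R be the class of subsets of ℝ^{d−1} × ℝ of the form {(x, y) : (1, xᵀ)u · sign(y − (1, xᵀ)θ) ≥ 0}, ranging over nonzero u ∈ ℝ^d and θ ∈ ℝ^d. Then the n-th shatter coefficient of 𝒞_R, defined as s(𝒞_R, n) = max over size-n sets D ⊆ ℝ^{d−1} × ℝ of the number of distinct sets D ∩ C with C ∈ 𝒞_R, satisfies s(𝒞_R, n) ≤ 16·((n − 1)^{d−1} + 1)⁴. -/
open scoped Classical

/-- The augmented covariate vector `(1, xᵀ)` for `x ∈ ℝ^{d−1}`. -/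
def aug {d : ℕ} (x : Fin (d - 1) → ℝ) : Fin d → ℝ :=
  fun j => if h : (j : ℕ) = 0 then 1 else x ⟨(j : ℕ) - 1, by omega⟩

namespace ShatterAux

/-! ### Real.sign helpers -/

lemma sign_nonneg_iff {x : ℝ} : 0 ≤ Real.sign x ↔ 0 ≤ x := by
  rcases lt_trichotomy x 0 with h | h | h
  · rw [Real.sign_of_neg h]; constructor <;> intro h' <;> linarith
  · subst h; simp
  · rw [Real.sign_of_pos h]; constructor <;> intro h' <;> linarith

lemma sign_nonpos_iff {x : ℝ} : Real.sign x ≤ 0 ↔ x ≤ 0 := by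
  rcases lt_trichotomy x 0 with h | h | h
  · rw [Real.sign_of_neg h]; constructor <;> intro h' <;> linarith
  · subst h; simp
  · rw [Real.sign_of_pos h]; constructor <;> intro h' <;> linarith

lemma neg_of_sign_eq_neg_one {x : ℝ} (h : Real.sign x = -1) : x < 0 := by
  rcases lt_trichotomy x 0 with h' | h' | h'
  · exact h'
  · subst h'; rw [Real.sign_zero] at h; norm_num at h
  · rw [Real.sign_of_pos h'] at h; norm_num at h

lemma pos_of_sign_eq_one {x : ℝ} (h : Real.sign x = 1) : 0 < x := by
  rcases lt_trichotomy x 0 with h' | h' | h'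
  · rw [Real.sign_of_neg h'] at h; norm_num at h
  · subst h'; rw [Real.sign_zero] at h; norm_num at h
  · exact h'

lemma sign_mul_sign_iff (x y : ℝ) :
    0 ≤ x * Real.sign y ↔ 0 ≤ Real.sign x * Real.sign y := by
  rcases lt_trichotomy y 0 with h | h | h
  · rw [Real.sign_of_neg h, mul_neg_one, mul_neg_one, neg_nonneg, neg_nonneg]
    exact ⟨fun h' => sign_nonpos_iff.2 h', fun h' => sign_nonpos_iff.1 h'⟩
  · subst h; simp
  · rw [Real.sign_of_pos h, mul_one, mul_one]
    exact ⟨fun h' => sign_nonneg_iff.2 h', fun h' => sign_nonneg_iff.1 h'⟩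

/-! ### Sign patterns of a finite family of affine functionals -/

variable {ι : Type} [Fintype ι] [DecidableEq ι]

/-- The sign pattern (restricted to `s`, `0` outside `s`) of the family of affine
functionals `u ↦ c i + ∑ j, w i j * u j`, evaluated at parameter `u`. -/
noncomputable def sgnPat {m : ℕ} (w : ι → Fin m → ℝ) (c : ι → ℝ) (s : Finset ι)
    (u : Fin m → ℝ) : ι → ℝ :=
  fun i => if i ∈ s then Real.sign (c i + ∑ j, w i j * u j) else 0

/-- Bound on the number of sign patterns: `1` if `m = 0`, else `2 n^m + 1`. -/
def patBound : ℕ → ℕ → ℕ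
  | 0, _ => 1
  | m + 1, n => 2 * n ^ (m + 1) + 1

lemma patBound_mono (m : ℕ) {n n' : ℕ} (h : n ≤ n') : patBound m n ≤ patBound m n' := by
  cases m with
  | zero => exact le_refl _
  | succ k =>
    simp only [patBound]
    have := Nat.pow_le_pow_left h (k + 1)
    omega

lemma pow_aux (n k : ℕ) : n ^ (k + 2) + 2 * n ^ (k + 1) + 1 ≤ (n + 1) ^ (k + 2) := by
  induction k with
  | zero =>
    have h : (n + 1) ^ (0 + 2) = n ^ (0 + 2) + 2 * n ^ (0 + 1) + 1 := by ring
    linarith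
  | succ k ih =>
    have h1 : (n + 1) ^ (k + 1 + 2) = (n + 1) ^ (k + 2) * (n + 1) := by ring
    have h2 : (n ^ (k + 2) + 2 * n ^ (k + 1) + 1) * (n + 1)
        = (n ^ (k + 1 + 2) + 2 * n ^ (k + 1 + 1) + 1) + (n ^ (k + 2) + 2 * n ^ (k + 1) + n) := by
      ring
    have h3 := Nat.mul_le_mul_right (n + 1) ih
    rw [h2] at h3
    rw [h1]
    exact le_trans (Nat.le_add_right _ _) h3

lemma patBound_step (m n : ℕ) :
    patBound (m + 1) n + 2 * patBound m n ≤ patBound (m + 1) (n + 1) := by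
  cases m with
  | zero =>
    show 2 * n ^ (0 + 1) + 1 + 2 * 1 ≤ 2 * (n + 1) ^ (0 + 1) + 1
    have h1 : n ^ (0 + 1) = n := by ring
    have h2 : (n + 1) ^ (0 + 1) = n + 1 := by ring
    omega
  | succ k =>
    show 2 * n ^ (k + 1 + 1) + 1 + 2 * (2 * n ^ (k + 1) + 1) ≤ 2 * (n + 1) ^ (k + 1 + 1) + 1
    have h0 : (k : ℕ) + 1 + 1 = k + 2 := rfl
    rw [h0]
    have := pow_aux n k
    linarith

lemma sgnPat_range_finite {m : ℕ} (w : ι → Fin m → ℝ) (c : ι → ℝ) (s : Finset ι) :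
    (Set.range (sgnPat w c s)).Finite := by
  have hsub : Set.range (sgnPat w c s)
      ⊆ {f : ι → ℝ | ∀ i, f i ∈ ({-1, 0, 1} : Set ℝ)} := by
    rintro f ⟨u, rfl⟩ i
    simp only [sgnPat]
    split
    · rcases Real.sign_apply_eq (c i + ∑ j, w i j * u j) with h | h | h <;> simp [h]
    · simp
  have hfin : ∀ i : ι, (({-1, 0, 1} : Set ℝ)).Finite := fun _ =>
    (Set.finite_singleton _).insert _ |>.insert _
  exact (Set.Finite.pi' hfin).subset hsub

/-- Affine evaluation along segments. -/
lemma affine_seg {m : ℕ} (w : Fin m → ℝ) (c t : ℝ) (u u' : Fin m → ℝ) :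
    c + ∑ j, w j * ((1 - t) * u' j + t * u j)
      = (1 - t) * (c + ∑ j, w j * u' j) + t * (c + ∑ j, w j * u j) := by
  have h : ∑ j, w j * ((1 - t) * u' j + t * u j)
      = (∑ j, (1 - t) * (w j * u' j)) + ∑ j, t * (w j * u j) := by
    rw [← Finset.sum_add_distrib]
    exact Finset.sum_congr rfl fun j _ => by ring
  rw [h, ← Finset.mul_sum, ← Finset.mul_sum]
  ring

lemma exists_zero_pat_core {m : ℕ} (w : ι → Fin m → ℝ) (c : ι → ℝ) (s' : Finset ι) (q : ι)
    (u u' : Fin m → ℝ)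
    (hpat : sgnPat w c s' u = sgnPat w c s' u')
    (hA : c q + ∑ j, w q j * u j < 0) (hB : 0 < c q + ∑ j, w q j * u' j) :
    ∃ x : Fin m → ℝ, c q + ∑ j, w q j * x j = 0 ∧ sgnPat w c s' x = sgnPat w c s' u := by
  set A := c q + ∑ j, w q j * u j with hAdef
  set B := c q + ∑ j, w q j * u' j with hBdef
  have hBA : 0 < B - A := by linarith
  set t : ℝ := B / (B - A) with htdef
  have ht0 : 0 ≤ t := div_nonneg hB.le hBA.le
  have ht1 : t ≤ 1 := by
    rw [div_le_one hBA]; linarith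
  have hkeyneg : ∀ a b : ℝ, a < 0 → b < 0 → (1 - t) * a + t * b < 0 := by
    intro a b ha hb
    rcases le_total a b with hab | hab
    · nlinarith [mul_nonneg (by linarith : (0:ℝ) ≤ 1 - t) (by linarith : (0:ℝ) ≤ b - a)]
    · nlinarith [mul_nonneg ht0 (by linarith : (0:ℝ) ≤ a - b)]
  have hkeypos : ∀ a b : ℝ, 0 < a → 0 < b → 0 < (1 - t) * a + t * b := by
    intro a b ha hb
    have := hkeyneg (-a) (-b) (by linarith) (by linarith)
    nlinarith
  refine ⟨fun j => (1 - t) * u' j + t * u j, ?_, ?_⟩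
  · rw [affine_seg, ← hAdef, ← hBdef, htdef]
    field_simp
    ring
  · funext i
    simp only [sgnPat]
    by_cases hi : i ∈ s'
    · rw [if_pos hi, if_pos hi, affine_seg]
      have hsign : Real.sign (c i + ∑ j, w i j * u j)
          = Real.sign (c i + ∑ j, w i j * u' j) := by
        have h := congrFun hpat i
        simpa only [sgnPat, if_pos hi] using h
      set F := c i + ∑ j, w i j * u j with hF
      set F' := c i + ∑ j, w i j * u' j with hF'
      rcases lt_trichotomy F 0 with h | h | h
      · have h' : F' < 0 := by
          apply neg_of_sign_eq_neg_one
          rw [← hsign, Real.sign_of_neg h]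
        rw [Real.sign_of_neg h, Real.sign_of_neg (hkeyneg F' F h' h)]
      · have h' : F' = 0 := by
          have : Real.sign F' = 0 := by rw [← hsign, h, Real.sign_zero]
          exact Real.sign_eq_zero_iff.1 this
        rw [h, h']
        simp
      · have h' : 0 < F' := by
          apply pos_of_sign_eq_one
          rw [← hsign, Real.sign_of_pos h]
        rw [Real.sign_of_pos h, Real.sign_of_pos (hkeypos F' F h' h)]
    · rw [if_neg hi, if_neg hi]

lemma exists_zero_pat {m : ℕ} (w : ι → Fin m → ℝ) (c : ι → ℝ) (s' : Finset ι) (q : ι)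
    (u u' : Fin m → ℝ)
    (hpat : sgnPat w c s' u = sgnPat w c s' u')
    (hne : Real.sign (c q + ∑ j, w q j * u j) ≠ Real.sign (c q + ∑ j, w q j * u' j)) :
    ∃ x : Fin m → ℝ, c q + ∑ j, w q j * x j = 0 ∧ sgnPat w c s' x = sgnPat w c s' u := by
  rcases lt_trichotomy (c q + ∑ j, w q j * u j) 0 with hA | hA | hA
  · rcases lt_trichotomy (c q + ∑ j, w q j * u' j) 0 with hB | hB | hB
    · exact absurd (by rw [Real.sign_of_neg hA, Real.sign_of_neg hB]) hne
    · exact ⟨u', hB, hpat.symm⟩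
    · exact exists_zero_pat_core w c s' q u u' hpat hA hB
  · exact ⟨u, hA, rfl⟩
  · rcases lt_trichotomy (c q + ∑ j, w q j * u' j) 0 with hB | hB | hB
    · obtain ⟨x, hx0, hxp⟩ := exists_zero_pat_core w c s' q u' u hpat.symm hB hA
      exact ⟨x, hx0, hxp.trans hpat.symm⟩
    · exact ⟨u', hB, hpat.symm⟩
    · exact absurd (by rw [Real.sign_of_pos hA, Real.sign_of_pos hB]) hne

/-- Reparametrize the hyperplane `{x : c q + ∑ j, w q j * x j = 0}` by `ℝ^m`. -/
lemma reparam {m : ℕ} (w : ι → Fin (m + 1) → ℝ) (c : ι → ℝ) (q : ι) (j₀ : Fin (m + 1))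
    (hj : w q j₀ ≠ 0) :
    ∃ (w' : ι → Fin m → ℝ) (c' : ι → ℝ) (e : (Fin m → ℝ) → (Fin (m + 1) → ℝ)),
      (∀ i v, c i + ∑ j, w i j * (e v) j = c' i + ∑ k, w' i k * v k) ∧
      (∀ x : Fin (m + 1) → ℝ, c q + ∑ j, w q j * x j = 0 → ∃ v, e v = x) := by
  set A : ℝ := -c q / w q j₀ with hA
  set B : Fin m → ℝ := fun k => -(w q (j₀.succAbove k)) / w q j₀ with hB
  refine ⟨fun i k => w i j₀ * B k + w i (j₀.succAbove k),
      fun i => c i + w i j₀ * A,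
      fun v => Fin.insertNth (α := fun _ => ℝ) j₀ (A + ∑ k, B k * v k) v, ?_, ?_⟩
  · intro i v
    beta_reduce
    rw [Fin.sum_univ_succAbove
      (fun j => w i j * Fin.insertNth (α := fun _ => ℝ) j₀ (A + ∑ k, B k * v k) v j) j₀]
    simp only [Fin.insertNth_apply_same, Fin.insertNth_apply_succAbove]
    have h : ∑ k, (w i j₀ * B k + w i (j₀.succAbove k)) * v k
        = (∑ k, w i j₀ * (B k * v k)) + ∑ k, w i (j₀.succAbove k) * v k := by
      rw [← Finset.sum_add_distrib]
      exact Finset.sum_congr rfl fun k _ => by ring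
    rw [h, ← Finset.mul_sum]
    ring
  · intro x hx
    refine ⟨fun k => x (j₀.succAbove k), ?_⟩
    rw [Fin.sum_univ_succAbove (fun j => w q j * x j) j₀] at hx
    beta_reduce
    rw [Fin.insertNth_eq_iff]
    refine ⟨?_, rfl⟩
    have hsum : (∑ k, B k * x (j₀.succAbove k)) * w q j₀
        = -(∑ k, w q (j₀.succAbove k) * x (j₀.succAbove k)) := by
      rw [Finset.sum_mul, ← Finset.sum_neg_distrib]
      refine Finset.sum_congr rfl fun k _ => ?_
      rw [hB]
      field_simp
    have hx' : w q j₀ * x j₀ = -c q - ∑ k, w q (j₀.succAbove k) * x (j₀.succAbove k) := by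
      linarith
    rw [hA]
    rw [div_add' _ _ _ hj, div_eq_iff hj]
    rw [hsum]
    linarith

/-- Counting lemma: if the second coordinates take at most three values and any first
coordinate with two distinct second coordinates lies in `S`, then
`|T| ≤ |R'| + 2 |S|`. -/
lemma count_lemma {A : Type} (T : Set (A × ℝ)) (hT : T.Finite) (R' S : Set A)
    (hR' : R'.Finite) (hS : S.Finite)
    (h1 : ∀ x ∈ T, x.1 ∈ R')
    (h2 : ∀ x ∈ T, x.2 = -1 ∨ x.2 = 0 ∨ x.2 = 1)
    (h3 : ∀ x ∈ T, ∀ y ∈ T, x.1 = y.1 → x.2 ≠ y.2 → x.1 ∈ S) :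
    T.ncard ≤ R'.ncard + 2 * S.ncard := by
  set T1 : Set A := {a | (a, (-1 : ℝ)) ∈ T} with hT1
  set T2 : Set A := {a | (a, (0 : ℝ)) ∈ T} with hT2
  set T3 : Set A := {a | (a, (1 : ℝ)) ∈ T} with hT3
  have hfst : ∀ (v : ℝ), {a | (a, v) ∈ T}.Finite := by
    intro v
    apply (hT.image Prod.fst).subset
    intro a ha
    exact ⟨(a, v), ha, rfl⟩
  have hT1f : T1.Finite := hfst _
  have hT2f : T2.Finite := hfst _
  have hT3f : T3.Finite := hfst _
  have hsub : T ⊆ (fun a => (a, (-1 : ℝ))) '' T1 ∪ (fun a => (a, (0 : ℝ))) '' T2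
      ∪ (fun a => (a, (1 : ℝ))) '' T3 := by
    rintro ⟨a, r⟩ hx
    rcases h2 _ hx with h | h | h <;> simp only at h <;> subst h
    · exact Or.inl (Or.inl ⟨a, hx, rfl⟩)
    · exact Or.inl (Or.inr ⟨a, hx, rfl⟩)
    · exact Or.inr ⟨a, hx, rfl⟩
  have hstep1 : T.ncard ≤ T1.ncard + T2.ncard + T3.ncard := by
    calc T.ncard ≤ ((fun a => (a, (-1 : ℝ))) '' T1 ∪ (fun a => (a, (0 : ℝ))) '' T2
        ∪ (fun a => (a, (1 : ℝ))) '' T3).ncard :=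
          Set.ncard_le_ncard hsub
            (((hT1f.image _).union (hT2f.image _)).union (hT3f.image _))
      _ ≤ ((fun a => (a, (-1 : ℝ))) '' T1 ∪ (fun a => (a, (0 : ℝ))) '' T2).ncard
          + ((fun a => (a, (1 : ℝ))) '' T3).ncard := Set.ncard_union_le _ _
      _ ≤ ((fun a => (a, (-1 : ℝ))) '' T1).ncard + ((fun a => (a, (0 : ℝ))) '' T2).ncard
          + ((fun a => (a, (1 : ℝ))) '' T3).ncard := by
          have := Set.ncard_union_le ((fun a => (a, (-1 : ℝ))) '' T1)
            ((fun a => (a, (0 : ℝ))) '' T2)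
          omega
      _ ≤ T1.ncard + T2.ncard + T3.ncard := by
          have e1 := Set.ncard_image_le (f := fun a => (a, (-1 : ℝ))) (s := T1) hT1f
          have e2 := Set.ncard_image_le (f := fun a => (a, (0 : ℝ))) (s := T2) hT2f
          have e3 := Set.ncard_image_le (f := fun a => (a, (1 : ℝ))) (s := T3) hT3f
          omega
  have hinter1 : T1 ∩ T2 ⊆ S := by
    rintro a ⟨ha1, ha2⟩
    exact h3 _ ha1 _ ha2 rfl (by norm_num)
  have hinter2 : (T1 ∪ T2) ∩ T3 ⊆ S := by
    rintro a ⟨ha12, ha3⟩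
    rcases ha12 with ha | ha
    · exact h3 _ ha _ ha3 rfl (by norm_num)
    · exact h3 _ ha _ ha3 rfl (by norm_num)
  have hunion : T1 ∪ T2 ∪ T3 ⊆ R' := by
    rintro a (ha | ha)
    · rcases ha with ha | ha
      · exact h1 _ ha
      · exact h1 _ ha
    · exact h1 _ ha
  have e1 : (T1 ∪ T2).ncard + (T1 ∩ T2).ncard = T1.ncard + T2.ncard :=
    Set.ncard_union_add_ncard_inter T1 T2 hT1f hT2f
  have e2 : (T1 ∪ T2 ∪ T3).ncard + ((T1 ∪ T2) ∩ T3).ncard = (T1 ∪ T2).ncard + T3.ncard :=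
    Set.ncard_union_add_ncard_inter (T1 ∪ T2) T3 (hT1f.union hT2f) hT3f
  have b1 : (T1 ∪ T2 ∪ T3).ncard ≤ R'.ncard := Set.ncard_le_ncard hunion hR'
  have b2 : (T1 ∩ T2).ncard ≤ S.ncard := Set.ncard_le_ncard hinter1 hS
  have b3 : ((T1 ∪ T2) ∩ T3).ncard ≤ S.ncard := Set.ncard_le_ncard hinter2 hS
  omega

/-- The main counting theorem: the number of sign patterns on `s` of a family of affine
functionals in `m` variables is at most `patBound m s.card`. -/
lemma sgnPat_ncard (s : Finset ι) : ∀ (m : ℕ) (w : ι → Fin m → ℝ) (c : ι → ℝ),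
    (Set.range (sgnPat w c s)).ncard ≤ patBound m s.card := by
  induction s using Finset.induction_on with
  | empty =>
    intro m w c
    have hrange : Set.range (sgnPat w c ∅) ⊆ {fun _ => (0 : ℝ)} := by
      rintro f ⟨u, rfl⟩
      have : sgnPat w c ∅ u = fun _ => (0 : ℝ) := by
        funext i; simp [sgnPat]
      simp [this]
    have := Set.ncard_le_ncard hrange (Set.finite_singleton _)
    rw [Set.ncard_singleton] at this
    refine le_trans this ?_
    cases m <;> simp [patBound]
  | @insert q s' hq ih =>
    intro m w c
    cases m with
    | zero =>
      have hrange : Set.range (sgnPat w c (insert q s'))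
          ⊆ {sgnPat w c (insert q s') (fun _ => 0)} := by
        rintro f ⟨u, rfl⟩
        have : u = fun _ => 0 := Subsingleton.elim _ _
        rw [this]
        rfl
      have := Set.ncard_le_ncard hrange (Set.finite_singleton _)
      rw [Set.ncard_singleton] at this
      exact le_trans this (by simp [patBound])
    | succ m' =>
      by_cases hw : ∃ j₀, w q j₀ ≠ 0
      · -- main case
        obtain ⟨j₀, hj₀⟩ := hw
        obtain ⟨w', c', e, hrep, hsurj⟩ := reparam w c q j₀ hj₀
        have hR'fin := sgnPat_range_finite w c s'
        have hR₀fin := sgnPat_range_finite w' c' s'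
        have hRfin := sgnPat_range_finite w c (insert q s')
        have hupd : ∀ u, Function.update (sgnPat w c (insert q s') u) q 0
            = sgnPat w c s' u := by
          intro u
          funext i
          by_cases hiq : i = q
          · subst hiq
            rw [Function.update_self]
            simp [sgnPat, hq]
          · rw [Function.update_of_ne hiq]
            simp only [sgnPat, Finset.mem_insert]
            by_cases hi : i ∈ s' <;> simp [hi, hiq]
        have hatq : ∀ u, sgnPat w c (insert q s') u q
            = Real.sign (c q + ∑ j, w q j * u j) := by
          intro u
          simp [sgnPat, Finset.mem_insert_self]
        set Φ : (ι → ℝ) → (ι → ℝ) × ℝ := fun f => (Function.update f q 0, f q) with hΦdef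
        have hΦinj : Function.Injective Φ := by
          intro f g h
          rw [Prod.mk.injEq] at h
          funext i
          by_cases hiq : i = q
          · subst hiq; exact h.2
          · have := congrFun h.1 i
            rwa [Function.update_of_ne hiq, Function.update_of_ne hiq] at this
        have hsplit : ∀ u u' : Fin (m' + 1) → ℝ,
            sgnPat w c s' u = sgnPat w c s' u' →
            Real.sign (c q + ∑ j, w q j * u j) ≠ Real.sign (c q + ∑ j, w q j * u' j) →
            sgnPat w c s' u ∈ Set.range (sgnPat w' c' s') := by
          intro u u' h1 h2
          obtain ⟨x, hx0, hxpat⟩ := exists_zero_pat w c s' q u u' h1 h2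
          obtain ⟨v, hv⟩ := hsurj x hx0
          refine ⟨v, ?_⟩
          rw [← hxpat]
          funext i
          simp only [sgnPat]
          by_cases hi : i ∈ s'
          · rw [if_pos hi, if_pos hi, ← hrep i v, hv]
          · rw [if_neg hi, if_neg hi]
        have hcount := count_lemma (Φ '' Set.range (sgnPat w c (insert q s')))
          (hRfin.image _) (Set.range (sgnPat w c s')) (Set.range (sgnPat w' c' s'))
          hR'fin hR₀fin
          (by rintro x ⟨f, ⟨u, rfl⟩, rfl⟩
              exact ⟨u, (hupd u).symm⟩)
          (by rintro x ⟨f, ⟨u, rfl⟩, rfl⟩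
              simp only [hΦdef, hatq u]
              exact Real.sign_apply_eq _)
          (by rintro x ⟨f, ⟨u, rfl⟩, rfl⟩ y ⟨g, ⟨u', rfl⟩, rfl⟩ hxy hne
              simp only [hΦdef, hupd, hatq] at hxy hne ⊢
              exact hsplit u u' hxy hne)
        have hceq : (Set.range (sgnPat w c (insert q s'))).ncard
            = (Φ '' Set.range (sgnPat w c (insert q s'))).ncard :=
          (Set.ncard_image_of_injective _ hΦinj).symm
        have hb1 := ih (m' + 1) w c
        have hb2 := ih m' w' c'
        have hstep := patBound_step m' s'.card
        rw [Finset.card_insert_of_notMem hq]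
        linarith
      · -- w q = 0 : the new functional is constant
        push_neg at hw
        have hcomp : sgnPat w c (insert q s')
            = (fun f => Function.update f q (Real.sign (c q))) ∘ sgnPat w c s' := by
          funext u
          funext i
          by_cases hiq : i = q
          · subst hiq
            have hsum : ∑ j, w i j * u j = 0 := by
              apply Finset.sum_eq_zero
              intro j _
              rw [hw j, zero_mul]
            simp [sgnPat, Function.update_self, hsum]
          · simp only [Function.comp_apply, Function.update_of_ne hiq, sgnPat,
              Finset.mem_insert]
            by_cases hi : i ∈ s' <;> simp [hi, hiq]
        rw [hcomp, Set.range_comp]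
        have h1 := Set.ncard_image_le (f := fun f => Function.update f q (Real.sign (c q)))
          (sgnPat_range_finite w c s')
        have h2 := ih (m' + 1) w c
        have h3 : patBound (m' + 1) s'.card ≤ patBound (m' + 1) (insert q s').card := by
          apply patBound_mono
          rw [Finset.card_insert_of_notMem hq]
          omega
        linarith

/-! ### Arithmetic for the final bound -/

lemma pow_geom (a : ℕ) (ha : 4 ≤ a) : ∀ k : ℕ, (a + 1) ^ (k + 3) ≤ a ^ (2 * k + 4) := by
  intro k
  induction k with
  | zero =>
    have h : (a + 1) ^ (0 + 3) = a ^ 3 + 3 * a ^ 2 + 3 * a + 1 := by ring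
    have h4 : a ^ (2 * 0 + 4) = a * a ^ 3 := by ring
    have h3 : a ^ 3 = a * a ^ 2 := by ring
    have h2 : a ^ 2 = a * a := by ring
    have k1 : 4 * a ^ 3 ≤ a * a ^ 3 := Nat.mul_le_mul_right _ ha
    have k2 : 4 * a ^ 2 ≤ a * a ^ 2 := Nat.mul_le_mul_right _ ha
    have k3 : 4 * a ≤ a * a := Nat.mul_le_mul_right _ ha
    linarith
  | succ k ih =>
    have h1 : (a + 1) ^ (k + 4) = (a + 1) ^ (k + 3) * (a + 1) := by ring
    have h2 : a ^ (2 * (k + 1) + 4) = a ^ (2 * k + 4) * a ^ 2 := by ring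
    rw [h1, h2]
    have ha2 : a + 1 ≤ a ^ 2 := by nlinarith
    calc (a + 1) ^ (k + 3) * (a + 1) ≤ a ^ (2 * k + 4) * (a + 1) :=
          Nat.mul_le_mul_right _ ih
      _ ≤ a ^ (2 * k + 4) * a ^ 2 := Nat.mul_le_mul_left _ ha2
end ShatterAux

/-- The `n`-th shatter coefficient of the class `𝒞_R` of subsets of
`ℝ^{d−1} × ℝ` of the form `{(x, y) : (1,xᵀ)u · sign(y − (1,xᵀ)θ) ≥ 0}` (over nonzero
`u ∈ ℝ^d` and `θ ∈ ℝ^d`) is at most `16((n−1)^{d−1} + 1)⁴`: for every `n`-element set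
`D`, the collection of distinct traces `D ∩ C`, `C ∈ 𝒞_R`, is finite with at most
`16((n−1)^{d−1} + 1)⁴` elements. -/
theorem regression_class_shatter_coefficient (d n : ℕ) (hd : 2 ≤ d)
    (D : Finset ((Fin (d - 1) → ℝ) × ℝ)) (hD : D.card = n) :
    {E : Set ((Fin (d - 1) → ℝ) × ℝ) | ∃ u θ : Fin d → ℝ, u ≠ 0 ∧
      E = ↑D ∩ {pt : (Fin (d - 1) → ℝ) × ℝ |
        0 ≤ (∑ j, aug pt.1 j * u j) * Real.sign (pt.2 - ∑ j, aug pt.1 j * θ j)}}.Finite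
    ∧
    {E : Set ((Fin (d - 1) → ℝ) × ℝ) | ∃ u θ : Fin d → ℝ, u ≠ 0 ∧
      E = ↑D ∩ {pt : (Fin (d - 1) → ℝ) × ℝ |
        0 ≤ (∑ j, aug pt.1 j * u j) * Real.sign (pt.2 - ∑ j, aug pt.1 j * θ j)}}.ncard
      ≤ 16 * ((n - 1) ^ (d - 1) + 1) ^ 4 := by
  classical
  set S : Set (Set ((Fin (d - 1) → ℝ) × ℝ)) :=
    {E : Set ((Fin (d - 1) → ℝ) × ℝ) | ∃ u θ : Fin d → ℝ, u ≠ 0 ∧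
      E = ↑D ∩ {pt : (Fin (d - 1) → ℝ) × ℝ |
        0 ≤ (∑ j, aug pt.1 j * u j) * Real.sign (pt.2 - ∑ j, aug pt.1 j * θ j)}} with hS
  -- `S` consists of subsets of `D`, hence is finite
  have hPsub : S ⊆ (fun t : Finset ((Fin (d - 1) → ℝ) × ℝ) =>
      (↑t : Set ((Fin (d - 1) → ℝ) × ℝ))) '' ↑D.powerset := by
    rintro E ⟨u, θ, hu, rfl⟩
    refine ⟨D.filter (fun pt => 0 ≤ (∑ j, aug pt.1 j * u j) *
        Real.sign (pt.2 - ∑ j, aug pt.1 j * θ j)), ?_, ?_⟩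
    · exact Finset.mem_coe.2 (Finset.mem_powerset.2 (Finset.filter_subset _ _))
    · ext pt
      simp [Finset.mem_filter]
  have hfin : S.Finite := ((D.powerset.finite_toSet).image _).subset hPsub
  refine ⟨hfin, ?_⟩
  by_cases hn : n ≤ 4
  · -- small `n`: use the trivial powerset bound
    have h1 : S.ncard ≤ ((fun t : Finset ((Fin (d - 1) → ℝ) × ℝ) =>
        (↑t : Set ((Fin (d - 1) → ℝ) × ℝ))) '' ↑D.powerset).ncard :=
      Set.ncard_le_ncard hPsub ((D.powerset.finite_toSet).image _)
    have h2 : ((fun t : Finset ((Fin (d - 1) → ℝ) × ℝ) =>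
        (↑t : Set ((Fin (d - 1) → ℝ) × ℝ))) '' ↑D.powerset).ncard
        ≤ (↑D.powerset : Set (Finset ((Fin (d - 1) → ℝ) × ℝ))).ncard :=
      Set.ncard_image_le D.powerset.finite_toSet
    rw [Set.ncard_coe_finset, Finset.card_powerset, hD] at h2
    have h3 : 2 ^ n ≤ 16 := le_trans (Nat.pow_le_pow_right (by norm_num) hn) (by norm_num)
    have h4 : 1 ≤ ((n - 1) ^ (d - 1) + 1) ^ 4 := Nat.one_le_pow _ _ (by omega)
    calc S.ncard ≤ 2 ^ n := le_trans h1 h2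
      _ ≤ 16 := h3
      _ = 16 * 1 := by ring
      _ ≤ 16 * ((n - 1) ^ (d - 1) + 1) ^ 4 := Nat.mul_le_mul_left _ h4
  · push_neg at hn
    have hn5 : 5 ≤ n := hn
    -- index type: elements of D
    set wG : {pt : (Fin (d - 1) → ℝ) × ℝ // pt ∈ D} → Fin d → ℝ :=
      fun p j => aug p.1.1 j with hwG
    set cG : {pt : (Fin (d - 1) → ℝ) × ℝ // pt ∈ D} → ℝ := fun _ => 0 with hcG
    set wF : {pt : (Fin (d - 1) → ℝ) × ℝ // pt ∈ D} → Fin d → ℝ :=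
      fun p j => -(aug p.1.1 j) with hwF
    set cF : {pt : (Fin (d - 1) → ℝ) × ℝ // pt ∈ D} → ℝ := fun p => p.1.2 with hcF
    have hfacG : ∀ (u : Fin d → ℝ) (p : {pt : (Fin (d - 1) → ℝ) × ℝ // pt ∈ D}),
        ShatterAux.sgnPat wG cG Finset.univ u p = Real.sign (∑ j, aug p.1.1 j * u j) := by
      intro u p
      simp only [ShatterAux.sgnPat, if_pos (Finset.mem_univ p)]
      congr 1
      show (0 : ℝ) + ∑ j, aug p.1.1 j * u j = ∑ j, aug p.1.1 j * u j
      rw [zero_add]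
    have hfacF : ∀ (θ : Fin d → ℝ) (p : {pt : (Fin (d - 1) → ℝ) × ℝ // pt ∈ D}),
        ShatterAux.sgnPat wF cF Finset.univ θ p
          = Real.sign (p.1.2 - ∑ j, aug p.1.1 j * θ j) := by
      intro θ p
      simp only [ShatterAux.sgnPat, if_pos (Finset.mem_univ p)]
      congr 1
      show p.1.2 + ∑ j, -(aug p.1.1 j) * θ j = p.1.2 - ∑ j, aug p.1.1 j * θ j
      simp only [neg_mul, Finset.sum_neg_distrib]
      rw [← sub_eq_add_neg]
    set Emap : ((({pt : (Fin (d - 1) → ℝ) × ℝ // pt ∈ D}) → ℝ) ×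
        (({pt : (Fin (d - 1) → ℝ) × ℝ // pt ∈ D}) → ℝ)) → Set ((Fin (d - 1) → ℝ) × ℝ) :=
      fun PQ => ↑D ∩ {pt : (Fin (d - 1) → ℝ) × ℝ |
        ∀ h : pt ∈ D, 0 ≤ PQ.1 ⟨pt, h⟩ * PQ.2 ⟨pt, h⟩} with hEmap
    have hfac : ∀ u θ : Fin d → ℝ,
        ((↑D : Set ((Fin (d - 1) → ℝ) × ℝ)) ∩ {pt : (Fin (d - 1) → ℝ) × ℝ |
          0 ≤ (∑ j, aug pt.1 j * u j) * Real.sign (pt.2 - ∑ j, aug pt.1 j * θ j)})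
          = Emap (ShatterAux.sgnPat wG cG Finset.univ u,
              ShatterAux.sgnPat wF cF Finset.univ θ) := by
      intro u θ
      ext pt
      simp only [hEmap, Set.mem_inter_iff, Set.mem_setOf_eq]
      constructor
      · rintro ⟨hpt, hle⟩
        refine ⟨hpt, fun h => ?_⟩
        rw [hfacG, hfacF]
        exact (ShatterAux.sign_mul_sign_iff _ _).1 hle
      · rintro ⟨hpt, hle⟩
        refine ⟨hpt, ?_⟩
        have h2 := hle (Finset.mem_coe.1 hpt)
        rw [hfacG, hfacF] at h2
        exact (ShatterAux.sign_mul_sign_iff _ _).2 h2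
    have hGfin := ShatterAux.sgnPat_range_finite wG cG Finset.univ
    have hFfin := ShatterAux.sgnPat_range_finite wF cF Finset.univ
    have hprodfin := hGfin.prod hFfin
    have hsub2 : S ⊆ Emap '' ((Set.range (ShatterAux.sgnPat wG cG Finset.univ)) ×ˢ
        (Set.range (ShatterAux.sgnPat wF cF Finset.univ))) := by
      rintro E ⟨u, θ, hu, rfl⟩
      exact ⟨(ShatterAux.sgnPat wG cG Finset.univ u, ShatterAux.sgnPat wF cF Finset.univ θ),
        ⟨⟨u, rfl⟩, ⟨θ, rfl⟩⟩, (hfac u θ).symm⟩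
    have hc1 : S.ncard ≤ (Emap '' ((Set.range (ShatterAux.sgnPat wG cG Finset.univ)) ×ˢ
        (Set.range (ShatterAux.sgnPat wF cF Finset.univ)))).ncard :=
      Set.ncard_le_ncard hsub2 (hprodfin.image _)
    have hc2 : (Emap '' ((Set.range (ShatterAux.sgnPat wG cG Finset.univ)) ×ˢ
        (Set.range (ShatterAux.sgnPat wF cF Finset.univ)))).ncard
          ≤ ((Set.range (ShatterAux.sgnPat wG cG Finset.univ)) ×ˢ
        (Set.range (ShatterAux.sgnPat wF cF Finset.univ))).ncard :=
      Set.ncard_image_le hprodfin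
    have hc3 : ((Set.range (ShatterAux.sgnPat wG cG Finset.univ)) ×ˢ
        (Set.range (ShatterAux.sgnPat wF cF Finset.univ))).ncard
          ≤ (Set.range (ShatterAux.sgnPat wG cG Finset.univ)).ncard *
            (Set.range (ShatterAux.sgnPat wF cF Finset.univ)).ncard := by
      rw [Set.ncard_eq_toFinset_card _ hprodfin, Set.ncard_eq_toFinset_card _ hGfin,
        Set.ncard_eq_toFinset_card _ hFfin]
      have hsubf : hprodfin.toFinset ⊆ hGfin.toFinset ×ˢ hFfin.toFinset := by
        intro x hx
        rw [Set.Finite.mem_toFinset] at hx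
        rw [Finset.mem_product, Set.Finite.mem_toFinset, Set.Finite.mem_toFinset]
        exact hx
      calc hprodfin.toFinset.card ≤ (hGfin.toFinset ×ˢ hFfin.toFinset).card :=
            Finset.card_le_card hsubf
        _ = hGfin.toFinset.card * hFfin.toFinset.card := Finset.card_product _ _
    have hcard_univ : (Finset.univ : Finset {pt : (Fin (d - 1) → ℝ) × ℝ // pt ∈ D}).card = n := by
      rw [Finset.card_univ, Fintype.card_coe, hD]
    have hpb : ShatterAux.patBound d n = 2 * n ^ d + 1 := by
      obtain ⟨m, rfl⟩ : ∃ m, d = m + 1 := ⟨d - 1, by omega⟩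
      rfl
    have hG := ShatterAux.sgnPat_ncard Finset.univ d wG cG
    have hF := ShatterAux.sgnPat_ncard Finset.univ d wF cF
    rw [hcard_univ, hpb] at hG hF
    -- arithmetic
    have key : 2 * n ^ d + 1 ≤ 4 * ((n - 1) ^ (d - 1) + 1) ^ 2 := by
      rcases eq_or_lt_of_le hd with hd2 | hd3
      · rw [← hd2]
        have hn1 : (n - 1) + 1 = n := by omega
        have h21 : (2 : ℕ) - 1 = 1 := rfl
        rw [h21, pow_one, hn1]
        have hsq : 1 ≤ n ^ 2 := Nat.one_le_pow _ _ (by omega)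
        linarith
      · obtain ⟨k, hk⟩ : ∃ k, d = k + 3 := ⟨d - 3, by omega⟩
        have ha : 4 ≤ n - 1 := by omega
        have hgeom := ShatterAux.pow_geom (n - 1) ha k
        have hn1 : (n - 1) + 1 = n := by omega
        rw [hn1] at hgeom
        have hd1 : d - 1 = k + 2 := by omega
        have hexp : (n - 1) ^ (2 * k + 4) = ((n - 1) ^ (k + 2)) ^ 2 := by ring
        rw [hexp] at hgeom
        rw [hd1, hk]
        have hsq : ((n - 1) ^ (k + 2) + 1) ^ 2
            = ((n - 1) ^ (k + 2)) ^ 2 + 2 * (n - 1) ^ (k + 2) + 1 := by ring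
        have hX0 : 0 ≤ (n - 1) ^ (k + 2) := Nat.zero_le _
        have hX20 : 0 ≤ ((n - 1) ^ (k + 2)) ^ 2 := Nat.zero_le _
        linarith
    have htotal : S.ncard ≤ (2 * n ^ d + 1) * (2 * n ^ d + 1) := by
      have := Nat.mul_le_mul hG hF
      linarith
    have hfinal : (2 * n ^ d + 1) * (2 * n ^ d + 1) ≤ 16 * ((n - 1) ^ (d - 1) + 1) ^ 4 := by
      have hmul := Nat.mul_le_mul key key
      have heq : (4 * ((n - 1) ^ (d - 1) + 1) ^ 2) * (4 * ((n - 1) ^ (d - 1) + 1) ^ 2)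
          = 16 * ((n - 1) ^ (d - 1) + 1) ^ 4 := by ring
      linarith
    exact le_trans htotal hfinal
end
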